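/- Let s ∈ (0,1), m > 0, and define the relativistic Poisson (Bessel) kernel P_m(t,x) = C'_{N,s} t^{2s} m^{(N+2s)/2} (t^2+|x|^2)^{−(N+2s)/4} K_{(N+2s)/2}(m√(t^2+|x|^2)) for t > 0, x ∈ R^N. Then ∫_{R^N} P_m(t,x) dx = θ(mt), where θ(r) = (2/Γ(s)) (r/2)^s K_s(r) is the solution to θ'' + ((1−2s)/t)θ' − θ = 0 with θ(0)=1. -/

import Mathlib

noncomputable section
open MeasureTheory Real Set Filter Metric
open scoped RealInnerProductSpace ENNReal Topology

abbrev Euc (N : ℕ) := EuclideanSpace ℝ (Fin N)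

/-- the point (t,x) ∈ ℝ^{N+1} = ℝ × ℝ^N -/
def pt {N : ℕ} (t : ℝ) (x : Euc N) : Euc (N+1) := WithLp.toLp 2 (Fin.cons t (WithLp.ofLp x) : Fin (N+1) → ℝ)

/-- κ_s = Γ(1-s)/(2^{2s-1} Γ(s)) = 2^{1-2s} Γ(1-s)/Γ(s) -/
def kap (s : ℝ) : ℝ := Real.Gamma (1-s) / (2 ^ (2*s-1) * Real.Gamma s)

/-- surface measure on the unit sphere of ℝ^n -/
def sphM (n : ℕ) : Measure (Metric.sphere (0 : Euc n) 1) := (volume : Measure (Euc n)).toSphere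

/-- upper half unit sphere S^N₊ of ℝ^{N+1} -/
def upSph (N : ℕ) : Set (Metric.sphere (0 : Euc (N+1)) 1) := {θ | 0 < (θ : Euc (N+1)) 0}

/-- open upper half space of ℝ^{N+1} -/
def upHS (N : ℕ) : Set (Euc (N+1)) := {z | 0 < z 0}

/-- open upper half ball of radius r -/
def upHB (N : ℕ) (r : ℝ) : Set (Euc (N+1)) := {z | 0 < z 0 ∧ ‖z‖ < r}

/-- unitary Fourier transform -/
def uFT (N : ℕ) (u : Euc N → ℂ) (ξ : Euc N) : ℂ :=
  (((2*Real.pi) ^ (-(N:ℝ)/2) : ℝ) : ℂ) *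
    ∫ x : Euc N, Complex.exp (-(Complex.I * ((⟪x, ξ⟫ : ℝ) : ℂ))) * u x

/-- modified Bessel function of the second kind (integral representation) -/
def besselK (ν r : ℝ) : ℝ := ∫ t in Ioi (0:ℝ), Real.exp (-r * Real.cosh t) * Real.cosh (ν * t)

/-- admissible angular function: restriction to the sphere of a 0-homogeneous function,
continuous away from the origin and differentiable in the open upper half space
(a regular representative class for H¹(S^N₊; θ₁^{1-2s})). -/
structure Adm (N : ℕ) (ψ : Euc (N+1) → ℝ) : Prop where
  homog : ∀ c : ℝ, 0 < c → ∀ z, ψ (c • z) = ψ z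
  cont : ContinuousOn ψ {z | z ≠ 0}
  diff : DifferentiableOn ℝ ψ (upHS N)

/-- ∫_{S^N₊} θ₁^{1-2s} ψ² dS -/
def sphDen (N : ℕ) (s : ℝ) (ψ : Euc (N+1) → ℝ) : ℝ :=
  ∫ θ in upSph N, ((θ : Euc (N+1)) 0) ^ (1-2*s) * (ψ (θ : Euc (N+1)))^2 ∂(sphM (N+1))

/-- the quadratic form Q(ψ,φ) of the spherical eigenvalue problem; for 0-homogeneous
functions the full gradient at points of the sphere coincides with the tangential one. -/
def sphQ (N : ℕ) (s : ℝ) (a : Euc N → ℝ) (ψ φ : Euc (N+1) → ℝ) : ℝ :=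
  (∫ θ in upSph N, ((θ : Euc (N+1)) 0) ^ (1-2*s) *
      ⟪gradient ψ (θ : Euc (N+1)), gradient φ (θ : Euc (N+1))⟫ ∂(sphM (N+1)))
  - kap s * ∫ θ' : Metric.sphere (0 : Euc N) 1,
      a θ' * ψ (pt 0 (θ' : Euc N)) * φ (pt 0 (θ' : Euc N)) ∂(sphM N)

/-- the set of Rayleigh quotients of the spherical problem -/
def RaySet (N : ℕ) (s : ℝ) (a : Euc N → ℝ) : Set ℝ :=
  {μ | ∃ ψ, Adm N ψ ∧ 0 < sphDen N s ψ ∧ μ = sphQ N s a ψ ψ / sphDen N s ψ}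

/-- the first eigenvalue μ₁(a) -/
def mu1 (N : ℕ) (s : ℝ) (a : Euc N → ℝ) : ℝ := sInf (RaySet N s a)

/-- eigenvalues of the weighted spherical eigenvalue problem (weak formulation) -/
def IsSphEig (N : ℕ) (s : ℝ) (a : Euc N → ℝ) (μ : ℝ) : Prop :=
  ∃ ψ, Adm N ψ ∧ 0 < sphDen N s ψ ∧
    ∀ φ, Adm N φ → sphQ N s a ψ φ =
      μ * ∫ θ in upSph N, ((θ : Euc (N+1)) 0) ^ (1-2*s) *
        ψ (θ : Euc (N+1)) * φ (θ : Euc (N+1)) ∂(sphM (N+1))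

/-- weak solution of -div(t^{1-2s}∇w) + m² t^{1-2s} w = 0 in B_R⁺ with weighted
Neumann boundary condition -lim_{t→0} t^{1-2s} ∂_t w = κ_s V w on B_R'. -/
def ExtWeakSol (N : ℕ) (s m R : ℝ) (V : Euc N → ℝ) (w : Euc (N+1) → ℝ) : Prop :=
  ∀ φ : Euc (N+1) → ℝ, ContDiff ℝ (⊤ : ℕ∞) φ → HasCompactSupport φ →
    tsupport φ ⊆ Metric.ball (0 : Euc (N+1)) R →
    (∫ z in upHS N, (z 0) ^ (1-2*s) *
        (⟪gradient w z, gradient φ z⟫ + m^2 * w z * φ z))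
    = kap s * ∫ x in Metric.ball (0 : Euc N) R, V x * w (pt 0 x) * φ (pt 0 x)

/-- membership of w in H¹(B_R⁺; t^{1-2s}) (regular-representative encoding) -/
structure H1Half (N : ℕ) (s R : ℝ) (w : Euc (N+1) → ℝ) : Prop where
  cont : ContinuousOn w {z | 0 ≤ z 0 ∧ ‖z‖ < R}
  diff : DifferentiableOn ℝ w (upHS N)
  fin : IntegrableOn (fun z => (z 0) ^ (1-2*s) * (‖gradient w z‖^2 + (w z)^2))
          (upHB N R) volume

/-- H(r) = r^{-(N+1-2s)} ∫_{S_r⁺} t^{1-2s} w² dS, written on the unit sphere -/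
def Hfun (N : ℕ) (s : ℝ) (w : Euc (N+1) → ℝ) (r : ℝ) : ℝ :=
  ∫ θ in upSph N, ((θ : Euc (N+1)) 0) ^ (1-2*s) * (w (r • (θ : Euc (N+1))))^2 ∂(sphM (N+1))

/-- D(r) = r^{2s-N} [∫_{B_r⁺} t^{1-2s}(|∇w|²+m²w²) - κ_s ∫_{B_r'} V w²] -/
def Dfun (N : ℕ) (s m : ℝ) (V : Euc N → ℝ) (w : Euc (N+1) → ℝ) (r : ℝ) : ℝ :=
  r ^ (2*s - N) * ((∫ z in upHB N r, (z 0) ^ (1-2*s) * (‖gradient w z‖^2 + m^2 * (w z)^2))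
    - kap s * ∫ x in Metric.ball (0 : Euc N) r, V x * (w (pt 0 x))^2)

/-- the singular potential a(x/|x|)|x|^{-2s} + h(x) -/
def singPot (N : ℕ) (s : ℝ) (a h : Euc N → ℝ) (x : Euc N) : ℝ :=
  a (‖x‖⁻¹ • x) * ‖x‖ ^ (-(2*s)) + h x

/-- hypothesis (1.2) on h: |h(x)| + |x·∇h(x)| ≤ C_h |x|^{-2s+χ} near 0 -/
def Hhyp (N : ℕ) (s χ Ch : ℝ) (h : Euc N → ℝ) : Prop :=
  ∃ r₀ > (0:ℝ), ∀ x : Euc N, x ≠ 0 → ‖x‖ < r₀ →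
    |h x| + |⟪(x : Euc N), gradient h x⟫| ≤ Ch * ‖x‖ ^ (-(2*s) + χ)

namespace BKAux

lemma cosh_lb (τ : ℝ) : τ^2/8 ≤ Real.cosh τ := by
  have h1 : Real.cosh τ = (Real.exp |τ| + Real.exp (-|τ|)) / 2 := by
    rw [← Real.cosh_abs, Real.cosh_eq]
  have h2 : 1 + |τ|/2 ≤ Real.exp (|τ|/2) := by
    have := Real.add_one_le_exp (|τ|/2); linarith
  have h3 : Real.exp (|τ|/2) * Real.exp (|τ|/2) = Real.exp |τ| := by
    rw [← Real.exp_add]; ring_nf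
  have h4 : (0:ℝ) ≤ Real.exp (-|τ|) := (Real.exp_pos _).le
  have h5 : (0:ℝ) ≤ 1 + |τ|/2 := by positivity
  have h6 : (1 + |τ|/2)^2 ≤ Real.exp |τ| := by
    rw [← h3]; nlinarith
  have h7 : τ^2 = |τ|^2 := (sq_abs τ).symm
  nlinarith [abs_nonneg τ]

lemma integrable_exp_cosh (r ν : ℝ) (hr : 0 < r) :
    Integrable (fun τ : ℝ => Real.exp (-(r * Real.cosh τ) + ν * τ)) := by
  have key : ∀ τ : ℝ, ‖Real.exp (-(r * Real.cosh τ) + ν * τ)‖ ≤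
      Real.exp (4*ν^2/r) * Real.exp (-(r/16) * τ^2) := by
    intro τ
    rw [Real.norm_eq_abs, Real.abs_exp, ← Real.exp_add]
    apply Real.exp_le_exp.2
    have h1 := cosh_lb τ
    have h2 : ν * τ ≤ |ν| * |τ| := by
      calc ν * τ ≤ |ν * τ| := le_abs_self _
      _ = |ν| * |τ| := abs_mul _ _
    have hs1 : Real.sqrt (r/16) ^ 2 = r/16 := Real.sq_sqrt (by positivity)
    have hs2 : Real.sqrt (4/r) ^ 2 = 4/r := Real.sq_sqrt (by positivity)
    have hs3 : Real.sqrt (r/16) * Real.sqrt (4/r) = 1/2 := by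
      rw [← Real.sqrt_mul (by positivity)]
      rw [show r/16 * (4/r) = 1/4 by field_simp; ring]
      rw [show (1:ℝ)/4 = (1/2)^2 by norm_num, Real.sqrt_sq (by norm_num)]
    have hexp : Real.sqrt (r/16)^2 * |τ|^2 - 2*(Real.sqrt (r/16) * Real.sqrt (4/r))*(|τ| * |ν|)
        + Real.sqrt (4/r)^2 * |ν|^2 ≥ 0 := by
      nlinarith [sq_nonneg (Real.sqrt (r/16) * |τ| - Real.sqrt (4/r) * |ν|)]
    rw [hs1, hs2, hs3] at hexp
    have h7 : τ^2 = |τ|^2 := (sq_abs τ).symm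
    have h8 : 4*ν^2/r = (4/r) * |ν|^2 := by rw [← sq_abs ν]; ring
    rw [h8]
    nlinarith [hexp, h1, h2, h7, hr]
  exact Integrable.mono' ((integrable_exp_neg_mul_sq (show (0:ℝ) < r/16 by positivity)).const_mul
      (Real.exp (4*ν^2/r)))
    (Continuous.aestronglyMeasurable (by continuity)) (Filter.Eventually.of_forall key)

lemma whole_line (r ν : ℝ) (hr : 0 < r) :
    ∫ τ : ℝ, Real.exp (-(r * Real.cosh τ) + ν * τ) = 2 * besselK ν r := by
  have hi1 := (integrable_exp_cosh r ν hr)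
  have hi2 := (integrable_exp_cosh r (-ν) hr)
  rw [← intervalIntegral.integral_Iic_add_Ioi (hi1.integrableOn) (hi1.integrableOn)]
  have hneg : ∫ τ in Iic (0:ℝ), Real.exp (-(r * Real.cosh τ) + ν * τ)
      = ∫ τ in Ioi (0:ℝ), Real.exp (-(r * Real.cosh τ) + (-ν) * τ) := by
    have h := integral_comp_neg_Ioi 0 (fun τ => Real.exp (-(r * Real.cosh τ) + ν * τ))
    rw [neg_zero] at h
    rw [← h]
    congr 1; funext τ
    rw [Real.cosh_neg]; ring_nf
  rw [hneg, ← integral_add (hi2.integrableOn) (hi1.integrableOn)]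
  rw [besselK, ← integral_const_mul]
  congr 1; funext τ
  simp only [Real.exp_add, Real.cosh_eq, neg_mul]
  rw [Real.exp_neg]
  ring

lemma besselK_rep (ν r : ℝ) (hr : 0 < r) :
    besselK ν r = 1/2 * (r/2) ^ ν *
      ∫ w in Ioi (0:ℝ), Real.exp (-(w + r^2/(4*w))) * w ^ (-ν-1) := by
  have hr2 : (0:ℝ) < r/2 := by positivity
  have himg : (fun τ : ℝ => r/2 * Real.exp (-τ)) '' univ = Ioi 0 := by
    rw [Set.image_univ]
    ext y; simp only [Set.mem_range, Set.mem_Ioi]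
    constructor
    · rintro ⟨τ, rfl⟩; positivity
    · intro hy
      refine ⟨-Real.log (y/(r/2)), ?_⟩
      rw [neg_neg, Real.exp_log (by positivity)]
      field_simp
  have hderiv : ∀ τ ∈ (univ : Set ℝ), HasDerivWithinAt (fun τ : ℝ => r/2 * Real.exp (-τ))
      (-(r/2 * Real.exp (-τ))) univ τ := by
    intro τ _
    have h1 : HasDerivAt (fun τ : ℝ => Real.exp (-τ)) (Real.exp (-τ) * (-1)) τ :=
      (Real.hasDerivAt_exp (-τ)).comp τ (hasDerivAt_neg τ)
    have h2 := h1.const_mul (r/2)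
    have h3 : -(r/2 * Real.exp (-τ)) = r/2 * (Real.exp (-τ) * (-1)) := by ring
    rw [h3]; exact h2.hasDerivWithinAt
  have hinj : Set.InjOn (fun τ : ℝ => r/2 * Real.exp (-τ)) univ := by
    intro a _ b _ h
    have h' := mul_left_cancel₀ (ne_of_gt hr2) h
    have := Real.exp_injective h'
    linarith
  have hsub := integral_image_eq_integral_abs_deriv_smul MeasurableSet.univ hderiv hinj
    (fun w => Real.exp (-(w + r^2/(4*w))) * w ^ (-ν-1))
  rw [himg] at hsub
  rw [hsub, Measure.restrict_univ]
  have hptw : ∀ τ : ℝ, |(-(r/2 * Real.exp (-τ)))| •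
      (Real.exp (-(r/2 * Real.exp (-τ) + r^2/(4*(r/2 * Real.exp (-τ))))) *
        (r/2 * Real.exp (-τ)) ^ (-ν-1))
      = (r/2) ^ (-ν) * Real.exp (-(r * Real.cosh τ) + ν * τ) := by
    intro τ
    have he : (0:ℝ) < Real.exp (-τ) := Real.exp_pos _
    rw [abs_neg, abs_of_pos (by positivity), smul_eq_mul]
    have hdiv : r^2/(4*(r/2 * Real.exp (-τ))) = r/2 * Real.exp τ := by
      rw [Real.exp_neg]
      rw [show (4*(r/2 * (Real.exp τ)⁻¹)) = 2*r*(Real.exp τ)⁻¹ by ring]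
      field_simp
    have harg : r/2 * Real.exp (-τ) + r^2/(4*(r/2 * Real.exp (-τ))) = r * Real.cosh τ := by
      rw [hdiv, Real.cosh_eq]; ring
    have hpow : (r/2 * Real.exp (-τ)) ^ (-ν-1)
        = (r/2) ^ (-ν-1) * Real.exp ((ν+1) * τ) := by
      rw [Real.mul_rpow hr2.le he.le]
      congr 1
      rw [Real.rpow_def_of_pos he, Real.log_exp]
      congr 1; ring
    rw [harg, hpow]
    have hc : r/2 * ((r/2) ^ (-ν-1)) = (r/2) ^ (-ν) := by
      nth_rewrite 1 [show r/2 = (r/2) ^ (1:ℝ) by rw [Real.rpow_one]]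
      rw [← Real.rpow_add hr2]; norm_num
    rw [show r/2 * Real.exp (-τ) * (Real.exp (-(r * Real.cosh τ)) * ((r/2) ^ (-ν-1) * Real.exp ((ν+1)*τ)))
        = (r/2 * (r/2) ^ (-ν-1)) * (Real.exp (-τ) * Real.exp ((ν+1)*τ) * Real.exp (-(r * Real.cosh τ))) by ring,
      hc, ← Real.exp_add, ← Real.exp_add]
    congr 1
    rw [Real.exp_eq_exp]; ring
  simp only [hptw]
  rw [integral_const_mul, whole_line r ν hr]
  rw [show (1:ℝ)/2 * (r/2)^ν * ((r/2)^(-ν) * (2 * besselK ν r))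
      = ((r/2)^ν * (r/2)^(-ν)) * besselK ν r by ring]
  rw [← Real.rpow_add hr2]
  norm_num

end BKAux

namespace BKAux2
open BKAux

lemma contOn (b p : ℝ) : ContinuousOn (fun w : ℝ => Real.exp (-(w + b/w)) * w ^ p) {w : ℝ | 0 < w} := by
  apply ContinuousOn.mul
  · exact Real.continuous_exp.comp_continuousOn
      ((continuousOn_id.add (continuousOn_const.div continuousOn_id
        (fun w hw => ne_of_gt hw))).neg)
  · exact continuousOn_id.rpow_const (fun w hw => Or.inl (ne_of_gt hw))

lemma integrableOn_heat (b p : ℝ) (hb : 0 < b) :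
    IntegrableOn (fun w : ℝ => Real.exp (-(w + b/w)) * w ^ p) (Ioi (0:ℝ)) := by
  have hmeas : ∀ (S : Set ℝ), S ⊆ {w : ℝ | 0 < w} → MeasurableSet S →
      AEStronglyMeasurable (fun w : ℝ => Real.exp (-(w + b/w)) * w ^ p) (volume.restrict S) := by
    intro S hS hSm
    exact ((contOn b p).mono hS).aestronglyMeasurable hSm
  have h01 : IntegrableOn (fun w : ℝ => Real.exp (-(w + b/w)) * w ^ p) (Ioc (0:ℝ) 1) := by
    set k : ℕ := ⌈-p⌉₊ with hk
    have hkp : 0 ≤ (k:ℝ) + p := by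
      have := Nat.le_ceil (-p)
      simp only [← hk] at this
      linarith
    apply Integrable.mono' (integrable_const ((k.factorial : ℝ) * (1/b) ^ k))
      (hmeas _ (fun w hw => hw.1) measurableSet_Ioc)
    filter_upwards [ae_restrict_mem measurableSet_Ioc] with w hw
    obtain ⟨hw0, hw1⟩ := hw
    have hwp : (0:ℝ) < w ^ p := Real.rpow_pos_of_pos hw0 p
    rw [Real.norm_eq_abs, abs_of_pos (by positivity)]
    have h1 : Real.exp (-(w + b/w)) ≤ Real.exp (-(b/w)) := by
      apply Real.exp_le_exp.2; simp only [neg_le_neg_iff]; linarith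
    have hterm : (b/w)^k / (k.factorial : ℝ) ≤ Real.exp (b/w) := by
      refine le_trans ?_ (Real.sum_le_exp_of_nonneg (by positivity) (k+1))
      exact Finset.single_le_sum (f := fun i => (b/w)^i / (i.factorial : ℝ))
        (fun i _ => by positivity) (Finset.self_mem_range_succ k)
    have h2 : Real.exp (-(b/w)) ≤ (k.factorial : ℝ) * (w/b) ^ k := by
      rw [Real.exp_neg]
      have hpos : (0:ℝ) < (b/w)^k / (k.factorial : ℝ) := by positivity
      calc (Real.exp (b/w))⁻¹ ≤ ((b/w)^k / (k.factorial : ℝ))⁻¹ :=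
            inv_anti₀ hpos hterm
        _ = (k.factorial : ℝ) * (w/b) ^ k := by
            rw [inv_div, div_eq_mul_inv, ← inv_pow, inv_div]
    calc Real.exp (-(w + b/w)) * w ^ p ≤ ((k.factorial : ℝ) * (w/b) ^ k) * w ^ p := by
          apply mul_le_mul (le_trans h1 h2) le_rfl hwp.le (by positivity)
      _ = (k.factorial : ℝ) * (1/b)^k * (w^k * w^p) := by ring
      _ ≤ (k.factorial : ℝ) * (1/b)^k * 1 := by
          apply mul_le_mul le_rfl ?_ (by positivity) (by positivity)
          rw [← Real.rpow_natCast w k, ← Real.rpow_add hw0]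
          exact Real.rpow_le_one hw0.le hw1 hkp
      _ = (k.factorial : ℝ) * (1/b)^k := by ring
  have h1i : IntegrableOn (fun w : ℝ => Real.exp (-(w + b/w)) * w ^ p) (Ioi (1:ℝ)) := by
    set q : ℝ := max p 0 with hq
    have hgam : IntegrableOn (fun x : ℝ => Real.exp (-x) * x ^ q) (Ioi (1:ℝ)) := by
      have h := (Real.GammaIntegral_convergent (show 0 < q + 1 by positivity)).mono_set
        (Ioi_subset_Ioi zero_le_one)
      simpa using h
    apply Integrable.mono' hgam (hmeas _ (fun w (hw : w ∈ Ioi (1:ℝ)) => show (0:ℝ) < w from lt_trans zero_lt_one hw) measurableSet_Ioi)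
    filter_upwards [ae_restrict_mem measurableSet_Ioi] with w hw
    have hw1 : (1:ℝ) ≤ w := le_of_lt hw
    have hw0 : (0:ℝ) < w := lt_of_lt_of_le zero_lt_one hw1
    rw [Real.norm_eq_abs, abs_of_pos (mul_pos (Real.exp_pos _) (Real.rpow_pos_of_pos hw0 p))]
    apply mul_le_mul
    · apply Real.exp_le_exp.2; have : 0 ≤ b / w := by positivity
      simp only [neg_le_neg_iff]; linarith
    · exact Real.rpow_le_rpow_of_exponent_le hw1 (le_max_left p 0)
    · exact (Real.rpow_pos_of_pos hw0 p).le
    · exact (Real.exp_pos _).le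
  rw [← Ioc_union_Ioi_eq_Ioi (zero_le_one' ℝ)]
  exact h01.union h1i

end BKAux2

section MainAux
open BKAux BKAux2

lemma gauss_int_euc (N : ℕ) (c : ℝ) (hc : 0 < c) :
    Integrable (fun x : EuclideanSpace ℝ (Fin N) => Real.exp (-c * ‖x‖^2)) := by
  have h := GaussianFourier.integrable_cexp_neg_mul_sq_norm_add (V := EuclideanSpace ℝ (Fin N))
    (b := (c:ℂ)) (by simpa using hc) 0 0
  have h2 := h.norm
  refine h2.congr (Filter.Eventually.of_forall fun v => ?_)
  simp [Complex.norm_exp, ← Complex.ofReal_pow]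

lemma gauss_eval_euc (N : ℕ) (c : ℝ) (hc : 0 < c) :
    ∫ x : EuclideanSpace ℝ (Fin N), Real.exp (-c * ‖x‖^2) = (π/c) ^ ((N:ℝ)/2) := by
  have h := GaussianFourier.integral_rexp_neg_mul_sq_norm (V := EuclideanSpace ℝ (Fin N)) hc
  rwa [finrank_euclideanSpace_fin] at h

end MainAux

/-- The relativistic Poisson (Bessel) kernel P_m (with its normalizing constant C'_{N,s})
satisfies ∫_{ℝ^N} P_m(t,x) dx = θ(mt) where θ(r) = (2/Γ(s))(r/2)^s K_s(r). -/
theorem bessel_kernel_mass (N : ℕ) (s m : ℝ) (hs0 : 0 < s) (hs1 : s < 1)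
    (hN : 2*s < N) (hm : 0 < m) :
    ∃ C' : ℝ, 0 < C' ∧ ∀ t : ℝ, 0 < t →
      (∫ x : Euc N, C' * t ^ (2*s) * m ^ (((N:ℝ)+2*s)/2) *
          (t^2 + ‖x‖^2) ^ (-(((N:ℝ)+2*s)/4)) *
          besselK (((N:ℝ)+2*s)/2) (m * Real.sqrt (t^2 + ‖x‖^2)))
      = 2 / Real.Gamma s * (m*t/2) ^ s * besselK s (m*t) := by
  have hπ : (0:ℝ) < π := Real.pi_pos
  have hΓ : 0 < Real.Gamma s := Real.Gamma_pos_of_pos hs0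
  set ν₀ : ℝ := ((N:ℝ)+2*s)/2 with hν₀def
  have hν₀ : 0 < ν₀ := by rw [hν₀def]; positivity
  set D : ℝ := m^ν₀ * (1/2) * (m/2)^ν₀ * (4*π/m^2)^((N:ℝ)/2) * 2 with hDdef
  have hD : 0 < D := by rw [hDdef]; positivity
  set C' : ℝ := 2 / Real.Gamma s * (m/2)^(2*s) / D with hC'def
  have hC' : 0 < C' := by rw [hC'def]; positivity
  refine ⟨C', hC', ?_⟩
  intro t ht
  set b : ℝ := m^2*t^2/4 with hbdef
  have hb : 0 < b := by rw [hbdef]; positivity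
  set c₁ : ℝ := C' * t^(2*s) * m^ν₀ * (1/2 * (m/2)^ν₀) with hc₁def
  set f : Euc N → ℝ → ℝ := fun x w =>
    Real.exp (-(w + b/w)) * Real.exp (-(m^2/(4*w)) * ‖x‖^2) * w^(-ν₀-1) with hfdef
  -- pointwise identity in x
  have hpt : ∀ x : Euc N,
      C' * t ^ (2*s) * m ^ ν₀ * (t^2 + ‖x‖^2) ^ (-(((N:ℝ)+2*s)/4)) *
        besselK ν₀ (m * Real.sqrt (t^2 + ‖x‖^2))
      = c₁ * ∫ w in Ioi (0:ℝ), f x w := by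
    intro x
    have hA : (0:ℝ) < t^2 + ‖x‖^2 := by positivity
    have hr : 0 < m * Real.sqrt (t^2+‖x‖^2) := by
      have := Real.sqrt_pos.2 hA; positivity
    rw [BKAux.besselK_rep ν₀ _ hr]
    have hsq : (m * Real.sqrt (t^2+‖x‖^2))^2 = m^2 * (t^2+‖x‖^2) := by
      rw [mul_pow, Real.sq_sqrt hA.le]
    have hint : (∫ w in Ioi (0:ℝ),
        Real.exp (-(w + (m*Real.sqrt (t^2+‖x‖^2))^2/(4*w))) * w^(-ν₀-1))
        = ∫ w in Ioi (0:ℝ), f x w := by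
      apply setIntegral_congr_fun measurableSet_Ioi
      intro w hw
      have hw0 : (0:ℝ) < w := hw
      simp only [hfdef]
      rw [hsq]
      rw [show -(w + m^2*(t^2+‖x‖^2)/(4*w)) = -(w + b/w) + (-(m^2/(4*w)) * ‖x‖^2) by
        rw [hbdef]; field_simp; ring]
      rw [Real.exp_add, mul_assoc]
    rw [hint]
    have hsplit : (m * Real.sqrt (t^2+‖x‖^2) / 2) ^ ν₀
        = (m/2)^ν₀ * (Real.sqrt (t^2+‖x‖^2)) ^ ν₀ := by
      rw [show m * Real.sqrt (t^2+‖x‖^2)/2 = (m/2) * Real.sqrt (t^2+‖x‖^2) by ring,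
        Real.mul_rpow (by positivity) (Real.sqrt_nonneg _)]
    have hpow : (t^2+‖x‖^2) ^ (-(((N:ℝ)+2*s)/4)) * (Real.sqrt (t^2+‖x‖^2)) ^ ν₀ = 1 := by
      rw [Real.sqrt_eq_rpow, ← Real.rpow_mul hA.le, ← Real.rpow_add hA,
        show -(((N:ℝ)+2*s)/4) + 1/2*ν₀ = 0 by rw [hν₀def]; ring, Real.rpow_zero]
    rw [hsplit, hc₁def]
    linear_combination (C' * t^(2*s) * m^ν₀ * (1/2 * (m/2)^ν₀ *
      (∫ w in Ioi (0:ℝ), f x w))) * hpow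
  rw [integral_congr_ae (Filter.Eventually.of_forall hpt), integral_const_mul]
  -- measurability of the uncurried function
  have hmeas : AEStronglyMeasurable (Function.uncurry f)
      ((volume : Measure (Euc N)).prod (volume.restrict (Ioi (0:ℝ)))) := by
    apply Measurable.aestronglyMeasurable
    apply Measurable.mul
    · apply Measurable.mul
      · exact Real.measurable_exp.comp
          ((measurable_snd.add (measurable_const.div measurable_snd)).neg)
      · exact Real.measurable_exp.comp
          (((measurable_const.div (measurable_const.mul measurable_snd)).neg).mul
            ((measurable_fst.norm).pow measurable_const))
    · exact (by fun_prop : Measurable fun w : ℝ => w ^ (-ν₀-1)).comp measurable_snd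
  -- integrability in x for fixed w > 0
  have hrw : ∀ w : ℝ, 0 < w → (fun x : Euc N => f x w)
      = fun x => (Real.exp (-(w + b/w)) * w^(-ν₀-1)) * Real.exp (-(m^2/(4*w)) * ‖x‖^2) := by
    intro w hw; funext x; simp only [hfdef]; ring
  have hcond1 : ∀ᵐ w ∂(volume.restrict (Ioi (0:ℝ))),
      Integrable (fun x : Euc N => f x w) := by
    filter_upwards [ae_restrict_mem measurableSet_Ioi] with w hw
    have hw0 : (0:ℝ) < w := hw
    rw [hrw w hw0]
    exact (gauss_int_euc N _ (by positivity)).const_mul _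
  have hIx : ∀ w : ℝ, 0 < w → (∫ x : Euc N, f x w)
      = (4*π/m^2)^((N:ℝ)/2) * (Real.exp (-(w + b/w)) * w^(((N:ℝ)/2) + (-ν₀-1))) := by
    intro w hw0
    have hcg : 0 < m^2/(4*w) := by positivity
    rw [hrw w hw0, integral_const_mul, gauss_eval_euc N _ hcg]
    rw [show (π/(m^2/(4*w))) = (4*π/m^2) * w by field_simp,
      Real.mul_rpow (by positivity) hw0.le, Real.rpow_add hw0]
    ring
  have hnn : ∀ w : ℝ, 0 < w → ∀ x : Euc N, 0 ≤ f x w := by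
    intro w hw x
    exact mul_nonneg (mul_nonneg (Real.exp_pos _).le (Real.exp_pos _).le)
      (Real.rpow_nonneg hw.le _)
  have hcond2 : Integrable (fun w => ∫ x : Euc N, ‖f x w‖)
      (volume.restrict (Ioi (0:ℝ))) := by
    have hgoal : Integrable (fun w : ℝ => (4*π/m^2)^((N:ℝ)/2) *
        (Real.exp (-(w + b/w)) * w^(((N:ℝ)/2) + (-ν₀-1)))) (volume.restrict (Ioi (0:ℝ))) := by
      have h := (BKAux2.integrableOn_heat b (((N:ℝ)/2) + (-ν₀-1)) hb).const_mul
        ((4*π/m^2)^((N:ℝ)/2))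
      exact h
    apply hgoal.congr
    filter_upwards [ae_restrict_mem measurableSet_Ioi] with w hw
    have hw0 : (0:ℝ) < w := hw
    rw [← hIx w hw0]
    congr 1
    funext x
    rw [Real.norm_eq_abs, abs_of_nonneg (hnn w hw0 x)]
  have hintf : Integrable (Function.uncurry f)
      ((volume : Measure (Euc N)).prod (volume.restrict (Ioi (0:ℝ)))) := by
    rw [MeasureTheory.integrable_prod_iff' hmeas]
    exact ⟨hcond1, hcond2⟩
  rw [MeasureTheory.integral_integral_swap hintf]
  have hswap : (∫ w in Ioi (0:ℝ), ∫ x : Euc N, f x w)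
      = (4*π/m^2)^((N:ℝ)/2) * ∫ w in Ioi (0:ℝ), Real.exp (-(w + b/w)) * w^(-s-1) := by
    rw [← integral_const_mul]
    apply setIntegral_congr_fun measurableSet_Ioi
    intro w hw
    have hw0 : (0:ℝ) < w := hw
    dsimp only
    rw [hIx w hw0, show ((N:ℝ)/2) + (-ν₀-1) = -s-1 by rw [hν₀def]; ring]
  rw [hswap]
  -- Bessel representation at s
  have hrep := BKAux.besselK_rep s (m*t) (by positivity)
  have hJ : (∫ w in Ioi (0:ℝ), Real.exp (-(w + (m*t)^2/(4*w))) * w^(-s-1))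
      = ∫ w in Ioi (0:ℝ), Real.exp (-(w + b/w)) * w^(-s-1) := by
    apply setIntegral_congr_fun measurableSet_Ioi
    intro w hw
    dsimp only
    rw [hbdef, div_div, mul_pow]
  rw [hJ] at hrep
  rw [hrep]
  -- final constant juggling
  have hmul : (m/2)^(2*s) * t^(2*s) = (m*t/2)^(2*s) := by
    rw [← Real.mul_rpow (by positivity) ht.le]
    congr 1; ring
  have hss : (m*t/2)^s * (m*t/2)^s = (m*t/2)^(2*s) := by
    rw [← Real.rpow_add (by positivity)]
    congr 1; ring
  have hXD : m^ν₀ * (1/2 * (m/2)^ν₀) * (4*π/m^2)^((N:ℝ)/2) = D/2 := by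
    rw [hDdef]; ring
  set J := ∫ w in Ioi (0:ℝ), Real.exp (-(w + b/w)) * w^(-s-1) with hJdef
  rw [hc₁def, hC'def]
  field_simp
  linear_combination (m^ν₀ * (m/2)^ν₀ * (4*π/m^2)^((N:ℝ)/2) * J) * (hmul.trans hss.symm)
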